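/- arXiv:1705.00529 — 2 statements merged into one kernel-verified Lean document; each statement's English description precedes it below -/
import Mathlib

section
/- (Pólya–Szegő inequality on the line) If u ∈ H^1(ℝ) is nonnegative, then its decreasing rearrangement u* onto ℝ⁺ satisfies ∫_{ℝ⁺} |(u*)'|² dx ≤ ∫_ℝ |u'|² dx. -/
/-!
Fix `0 < a ≤ b` and put `s = u⋆ b ≤ t = u⋆ a`. The band `E = {s < u < t}` has measure at most
`b - a`, because `{u ≥ t}` has measure at least `a` and `{u > s}` at most `b`. Since `u` vanishes
at `±∞` and reaches the level `t`, it crosses the band once upwards and once downwards, so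
`∫_E |u'| ≥ 2 (t - s)`, and Cauchy–Schwarz gives `4 (t - s)² ≤ (b - a) ∫_E u'²`. Thus the squared
difference quotients of `u⋆` are dominated by those of the nondecreasing bounded function
`G x = ¼ ∫_{u > u⋆ x} u'²`. By Lebesgue's differentiation theorem `(u⋆)'² ≤ G'` almost everywhere,
and `∫ G'` is at most the total increase of `G`, which is `¼ ∫ u'²`.
-/

open MeasureTheory Set Filter Topology
open scoped ENNReal

section DecreasingRearrangement

variable {α : Type*} [MeasurableSpace α]

noncomputable def decreasingRearrangement (μ : Measure α) (f : α → ℝ) (x : ℝ) : ℝ :=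
  sInf {t : ℝ | 0 ≤ t ∧ μ {y | t < f y} ≤ ENNReal.ofReal x}

variable {μ : Measure α} {f : α → ℝ}

lemma decreasingRearrangement_le {x t : ℝ} (ht : 0 ≤ t) (h : μ {y | t < f y} ≤ .ofReal x) :
    decreasingRearrangement μ f x ≤ t :=
  csInf_le ⟨0, fun _ hs => hs.1⟩ ⟨ht, h⟩

lemma ofReal_lt_measure_of_lt_decreasingRearrangement {x t : ℝ} (ht : 0 ≤ t)
    (h : t < decreasingRearrangement μ f x) : .ofReal x < μ {y | t < f y} :=
  lt_of_not_ge fun h' => h.not_ge (decreasingRearrangement_le ht h')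

lemma nonempty_rearrangementLevels (hf : BddAbove (range f)) (x : ℝ) :
    {t : ℝ | 0 ≤ t ∧ μ {y | t < f y} ≤ .ofReal x}.Nonempty := by
  obtain ⟨M, hM⟩ := hf
  have hempty : {y | max M 0 < f y} = ∅ :=
    eq_empty_of_forall_notMem fun y hy =>
      hy.not_ge ((hM (mem_range_self y)).trans (le_max_left _ _))
  exact ⟨max M 0, le_max_right _ _, by rw [hempty, measure_empty]; exact zero_le⟩

lemma decreasingRearrangement_nonneg (hf : BddAbove (range f)) (x : ℝ) :
    0 ≤ decreasingRearrangement μ f x :=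
  le_csInf (nonempty_rearrangementLevels hf x) fun _ ht => ht.1

lemma antitone_decreasingRearrangement (hf : BddAbove (range f)) :
    Antitone (decreasingRearrangement μ f) := fun _ _ hxy =>
  csInf_le_csInf ⟨0, fun _ ht => ht.1⟩ (nonempty_rearrangementLevels hf _)
    fun _ ht => ⟨ht.1, ht.2.trans (ENNReal.ofReal_le_ofReal hxy)⟩

/-- Right-continuity of `t ↦ μ {t < f}`: the infimum defining the rearrangement is attained. -/
lemma measure_lt_decreasingRearrangement_le (hf : BddAbove (range f)) (x : ℝ) :
    μ {y | decreasingRearrangement μ f x < f y} ≤ .ofReal x := by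
  set t := decreasingRearrangement μ f x
  obtain ⟨τ, hτ_anti, hτ_gt, hτ_lim⟩ := exists_seq_strictAnti_tendsto t
  have hunion : {y | t < f y} = ⋃ n, {y | τ n < f y} := by
    ext y
    simp only [mem_iUnion]
    exact ⟨fun hy => (hτ_lim.eventually (gt_mem_nhds hy)).exists,
      fun ⟨n, hn⟩ => (hτ_gt n).trans hn⟩
  have hmono : Monotone fun n => {y | τ n < f y} := fun m n hmn y hy =>
    (hτ_anti.antitone hmn).trans_lt hy
  rw [hunion, hmono.measure_iUnion]
  refine iSup_le fun n => ?_
  obtain ⟨s, hs, hsτ⟩ := exists_lt_of_csInf_lt (nonempty_rearrangementLevels hf x) (hτ_gt n)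
  exact (measure_mono fun y hy => hsτ.trans hy).trans hs.2

lemma ofReal_le_measure_decreasingRearrangement_le (hfm : Measurable f)
    (hfin : ∀ t, 0 < t → μ {y | t < f y} ≠ ∞) {x : ℝ}
    (hpos : 0 < decreasingRearrangement μ f x) :
    .ofReal x ≤ μ {y | decreasingRearrangement μ f x ≤ f y} := by
  set t := decreasingRearrangement μ f x
  obtain ⟨τ, hτ_mono, hτ_mem, hτ_lim⟩ := exists_seq_strictMono_tendsto' hpos
  have hinter : {y | t ≤ f y} = ⋂ n, {y | τ n < f y} := by
    ext y
    simp only [mem_iInter]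
    exact ⟨fun hy n => (hτ_mem n).2.trans_le hy,
      fun hy => le_of_tendsto' hτ_lim fun n => (hy n).le⟩
  have hanti : Antitone fun n => {y | τ n < f y} := fun m n hmn y hy =>
    (hτ_mono.monotone hmn).trans_lt hy
  rw [hinter, hanti.measure_iInter
    (fun _ => (measurableSet_lt measurable_const hfm).nullMeasurableSet) ⟨0, hfin _ (hτ_mem 0).1⟩]
  exact le_iInf fun n =>
    (ofReal_lt_measure_of_lt_decreasingRearrangement (hτ_mem n).1.le (hτ_mem n).2).le

lemma measure_preimage_Ioo_decreasingRearrangement_le (hf : BddAbove (range f))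
    (hfm : Measurable f) (hfin : ∀ t, 0 < t → μ {y | t < f y} ≠ ∞) {a b : ℝ} (ha : 0 ≤ a) :
    μ (f ⁻¹' Ioo (decreasingRearrangement μ f b) (decreasingRearrangement μ f a)) ≤
      .ofReal (b - a) := by
  set s := decreasingRearrangement μ f b
  set t := decreasingRearrangement μ f a
  rcases le_or_gt t s with hts | hst
  · simp [Ioo_eq_empty_of_le hts]
  have hdisj : Disjoint (f ⁻¹' Ioo s t) {y | t ≤ f y} :=
    disjoint_left.2 fun y hy hy' => hy.2.not_ge hy'
  have hsub : f ⁻¹' Ioo s t ∪ {y | t ≤ f y} ⊆ {y | s < f y} := union_subset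
    (fun y hy => hy.1) fun y hy => hst.trans_le hy
  have hsum : μ (f ⁻¹' Ioo s t) + .ofReal a ≤ .ofReal b := calc
    _ ≤ μ (f ⁻¹' Ioo s t) + μ {y | t ≤ f y} := by
      gcongr
      exact ofReal_le_measure_decreasingRearrangement_le hfm hfin
        ((decreasingRearrangement_nonneg hf b).trans_lt hst)
    _ = μ (f ⁻¹' Ioo s t ∪ {y | t ≤ f y}) :=
      (measure_union hdisj (measurableSet_le measurable_const hfm)).symm
    _ ≤ .ofReal b := (measure_mono hsub).trans (measure_lt_decreasingRearrangement_le hf b)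
  rw [ENNReal.ofReal_sub _ ha]
  exact ENNReal.le_sub_of_add_le_right ENNReal.ofReal_ne_top hsum

end DecreasingRearrangement

lemma MeasureTheory.MemLp.integrableOn_of_measure_ne_top {α E : Type*} [MeasurableSpace α]
    [NormedAddCommGroup E] {μ : Measure α} {g : α → E} {p : ℝ≥0∞} (hg : MemLp g p μ) (hp : 1 ≤ p) {s : Set α}
    (hs : μ s ≠ ∞) :
    IntegrableOn g s μ :=
  have : IsFiniteMeasure (μ.restrict s) := isFiniteMeasure_restrict.2 hs
  (hg.restrict s).integrable hp

lemma measure_lt_ne_top_of_memLp_two {α : Type*} [MeasurableSpace α] {μ : Measure α}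
    {f : α → ℝ} (hf : MemLp f 2 μ) {t : ℝ} (ht : 0 < t) : μ {y | t < f y} ≠ ∞ := by
  refine ne_top_of_le_ne_top (hf.integrable_sq.measure_ge_lt_top (pow_pos ht 2)).ne
    (measure_mono fun y (hy : t < f y) => ?_)
  show t ^ 2 ≤ f y ^ 2
  nlinarith

lemma sq_setIntegral_abs_le {α : Type*} [MeasurableSpace α] {μ : Measure α} {g : α → ℝ}
    {s : Set α} (hs : μ s ≠ ∞) (hg : MemLp g 2 (μ.restrict s)) :
    (∫ x in s, |g x| ∂μ) ^ 2 ≤ μ.real s * ∫ x in s, g x ^ 2 ∂μ := by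
  have : IsFiniteMeasure (μ.restrict s) := isFiniteMeasure_restrict.2 hs
  have habs : Integrable (fun x => |g x|) (μ.restrict s) := (hg.integrable one_le_two).abs
  have hsq : Integrable (fun x => g x ^ 2) (μ.restrict s) := hg.integrable_sq
  -- Cauchy–Schwarz via the discriminant of `c ↦ ∫ (|g| - c)² ≥ 0`.
  have hquad : ∀ c : ℝ, 0 ≤ μ.real s * (c * c) + (-2 * ∫ x in s, |g x| ∂μ) * c +
      ∫ x in s, g x ^ 2 ∂μ := fun c => by
    have hexpand : ∫ x in s, (|g x| - c) ^ 2 ∂μ = μ.real s * (c * c) +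
        (-2 * ∫ x in s, |g x| ∂μ) * c + ∫ x in s, g x ^ 2 ∂μ := by
      have hpt : ∀ x, (|g x| - c) ^ 2 = (g x ^ 2 - 2 * c * |g x|) + c ^ 2 := fun x => by
        rw [sub_sq, sq_abs]; ring
      have hlin : Integrable (fun x => g x ^ 2 - 2 * c * |g x|) (μ.restrict s) :=
        hsq.sub (habs.const_mul _)
      simp_rw [hpt]
      rw [integral_add hlin (integrable_const _),
        integral_sub hsq (habs.const_mul _), integral_const_mul, setIntegral_const, smul_eq_mul]
      ring
    exact hexpand ▸ integral_nonneg fun _ => sq_nonneg _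
  have := discrim_le_zero hquad
  rw [discrim] at this
  nlinarith

lemma bddAbove_range_of_tendsto_cocompact {X : Type*} [TopologicalSpace X] {f : X → ℝ}
    (hf : Continuous f) (hlim : Tendsto f (cocompact X) (𝓝 0)) : BddAbove (range f) :=
  (ZeroAtInftyContinuousMap.isBounded_range ⟨⟨f, hf⟩, hlim⟩).bddAbove

lemma deriv_sq_le_of_sq_sub_le {f G : ℝ → ℝ} {x g : ℝ} (hG : HasDerivAt G g x)
    (h : ∀ᶠ y in 𝓝[>] x, (f y - f x) ^ 2 ≤ (y - x) * (G y - G x)) : deriv f x ^ 2 ≤ g := by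
  have hslopeG : Tendsto (slope G x) (𝓝[>] x) (𝓝 g) :=
    (hasDerivAt_iff_tendsto_slope.1 hG).mono_left (nhdsWithin_mono _ fun _ hy => ne_of_gt hy)
  have hle : ∀ᶠ y in 𝓝[>] x, slope f x y ^ 2 ≤ slope G x y := by
    filter_upwards [h, self_mem_nhdsWithin] with y hy hxy
    have hpos : 0 < y - x := sub_pos.2 hxy
    rw [slope_def_field, slope_def_field, div_pow, div_le_div_iff₀ (by positivity) hpos]
    nlinarith
  by_cases hf : DifferentiableAt ℝ f x
  · have hslopef : Tendsto (slope f x) (𝓝[>] x) (𝓝 (deriv f x)) :=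
      (hasDerivAt_iff_tendsto_slope.1 hf.hasDerivAt).mono_left
        (nhdsWithin_mono _ fun _ hy => ne_of_gt hy)
    exact le_of_tendsto_of_tendsto (hslopef.pow 2) hslopeG hle
  · rw [deriv_zero_of_not_differentiableAt hf, zero_pow two_ne_zero]
    exact ge_of_tendsto hslopeG (hle.mono fun _ hy => (sq_nonneg _).trans hy)

/-- Pointwise `(f')² ≤ G'` wherever `G` is differentiable, and `∫ G'` is at most the mass `M - m`
of the Stieltjes measure of `G`. -/
lemma setIntegral_deriv_sq_le_of_sq_sub_le {f G : ℝ → ℝ} {U : Set ℝ} {m M : ℝ}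
    (hU : MeasurableSet U) (hG : Monotone G) (hGm : ∀ x, m ≤ G x) (hGM : ∀ x, G x ≤ M)
    (h : ∀ a ∈ U, ∀ b, a < b → (f b - f a) ^ 2 ≤ (b - a) * (G b - G a)) :
    ∫ x in U, deriv f x ^ 2 ≤ M - m := by
  set F := hG.stieltjesFunction
  have hF : ∀ x, F x ∈ Icc m M := fun x => by
    rw [hG.stieltjesFunction_eq]
    exact ⟨(hGm x).trans (hG.le_rightLim le_rfl), (hG.rightLim_le (lt_add_one x)).trans (hGM _)⟩
  have hbot : BddBelow (range F) := ⟨m, forall_mem_range.2 fun x => (hF x).1⟩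
  have htop : BddAbove (range F) := ⟨M, forall_mem_range.2 fun x => (hF x).2⟩
  have huniv : F.measure univ = .ofReal ((⨆ x, F x) - ⨅ x, F x) :=
    F.measure_univ (tendsto_atBot_ciInf F.mono hbot) (tendsto_atTop_ciSup F.mono htop)
  have : IsFiniteMeasure F.measure := ⟨by rw [huniv]; exact ENNReal.ofReal_lt_top⟩
  have hderiv : ∀ᵐ x, x ∈ U → deriv f x ^ 2 ≤ (F.measure.rnDeriv volume x).toReal := by
    filter_upwards [hG.ae_hasDerivAt] with x hx hxU
    exact deriv_sq_le_of_sq_sub_le hx (eventually_nhdsWithin_of_forall fun y hy => h x hxU y hy)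
  calc ∫ x in U, deriv f x ^ 2
      ≤ ∫ x in U, (F.measure.rnDeriv volume x).toReal :=
        integral_mono_of_nonneg (ae_of_all _ fun _ => sq_nonneg _)
          Measure.integrable_toReal_rnDeriv.integrableOn ((ae_restrict_iff' hU).2 hderiv)
    _ ≤ F.measure.real U := Measure.setIntegral_toReal_rnDeriv_le (measure_ne_top _ _)
    _ ≤ F.measure.real univ := measureReal_mono (subset_univ _)
    _ ≤ M - m := by
      rw [measureReal_def, huniv, ENNReal.toReal_ofReal (sub_nonneg.2 ((ciInf_le hbot 0).trans
        (le_ciSup htop 0)))]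
      exact sub_le_sub (ciSup_le fun x => (hF x).2) (le_ciInf fun x => (hF x).1)

section Sobolev

variable {u : ℝ → ℝ}

lemma tendsto_cocompact_zero_of_memLp_two (hu : MemLp u 2 volume) (hd : Differentiable ℝ u)
    (hu' : MemLp (deriv u) 2 volume) : Tendsto u (cocompact ℝ) (𝓝 0) := by
  have hderiv : ∀ x, HasDerivAt (fun y => u y ^ 2) (2 * u x * deriv u x) x := fun x => by
    simpa [mul_comm, mul_left_comm] using (hd x).hasDerivAt.fun_pow 2
  have hint : Integrable (fun x => 2 * u x * deriv u x) := by
    simpa only [mul_assoc, Pi.mul_apply] using (hu.integrable_mul hu').const_mul 2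
  have hsq : Tendsto (fun y => u y ^ 2) (cocompact ℝ) (𝓝 0) := by
    rw [cocompact_eq_atBot_atTop, tendsto_sup]
    exact ⟨tendsto_zero_of_hasDerivAt_of_integrableOn_Iic (a := 0) (fun x _ => hderiv x)
        hint.integrableOn hu.integrable_sq.integrableOn,
      tendsto_zero_of_hasDerivAt_of_integrableOn_Ioi (a := 0) (fun x _ => hderiv x)
        hint.integrableOn hu.integrable_sq.integrableOn⟩
  rw [tendsto_zero_iff_abs_tendsto_zero]
  simpa only [Function.comp_def, Real.sqrt_sq_eq_abs, Real.sqrt_zero] using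
    (Real.continuous_sqrt.tendsto 0).comp hsq

/-- On the last stretch of `[a, b]` where `f` climbs from level `s` to level `t`, the values of `f`
stay strictly between the two levels. -/
lemma sub_le_setIntegral_abs_deriv_of_le_of_le {f : ℝ → ℝ} (hf : Differentiable ℝ f)
    {a b s t : ℝ} (hab : a ≤ b) (hst : s < t) (ha : f a ≤ s) (hb : t ≤ f b)
    (hint : IntegrableOn (deriv f) (Icc a b)) :
    t - s ≤ ∫ y in Ioo a b ∩ f ⁻¹' Ioo s t, |deriv f y| := by
  obtain ⟨q, ⟨hq_mem, hqs⟩, hq_max⟩ :=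
    (isCompact_Icc.inter_right (isClosed_Iic.preimage hf.continuous)).exists_isGreatest
      (show (Icc a b ∩ f ⁻¹' Iic s).Nonempty from ⟨a, left_mem_Icc.2 hab, ha⟩)
  obtain ⟨p, ⟨hp_mem, htp⟩, hp_min⟩ :=
    (isCompact_Icc.inter_right (isClosed_Ici.preimage hf.continuous)).exists_isLeast
      (show (Icc q b ∩ f ⁻¹' Ici t).Nonempty from ⟨b, right_mem_Icc.2 hq_mem.2, hb⟩)
  have hfqp : f q < f p := (hqs : f q ≤ s).trans_lt (hst.trans_le htp)
  have hqp : q < p := hp_mem.1.lt_of_ne (by rintro rfl; exact hfqp.false)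
  have hsub : Ioo q p ⊆ Ioo a b ∩ f ⁻¹' Ioo s t := fun y hy =>
    ⟨⟨hq_mem.1.trans_lt hy.1, hy.2.trans_le hp_mem.2⟩,
      lt_of_not_ge fun h =>
        hy.1.not_ge (hq_max ⟨⟨hq_mem.1.trans hy.1.le, hy.2.le.trans hp_mem.2⟩, h⟩),
      lt_of_not_ge fun h => hy.2.not_ge (hp_min ⟨⟨hy.1.le, hy.2.le.trans hp_mem.2⟩, h⟩)⟩
  have hint' : IntegrableOn (deriv f) (Icc q p) :=
    hint.mono_set (Icc_subset_Icc hq_mem.1 hp_mem.2)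
  calc t - s ≤ f p - f q := sub_le_sub htp hqs
    _ = ∫ y in Ioo q p, deriv f y := by
      rw [← integral_Ioc_eq_integral_Ioo, ← intervalIntegral.integral_of_le hqp.le,
        intervalIntegral.integral_deriv_eq_sub (fun x _ => hf x)
          ((intervalIntegrable_iff_integrableOn_Icc_of_le hqp.le).2 hint')]
    _ ≤ ∫ y in Ioo q p, |deriv f y| := (le_abs_self _).trans abs_integral_le_integral_abs
    _ ≤ ∫ y in Ioo a b ∩ f ⁻¹' Ioo s t, |deriv f y| :=
      setIntegral_mono_set (hint.mono_set fun y hy => Ioo_subset_Icc_self hy.1).abs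
        (ae_of_all _ fun _ => abs_nonneg _) (LE.le.eventuallyLE hsub)

lemma two_mul_sub_le_setIntegral_abs_deriv_of_pos (hu : Differentiable ℝ u)
    (hint : LocallyIntegrable (deriv u)) (hbot : Tendsto u atBot (𝓝 0))
    (htop : Tendsto u atTop (𝓝 0)) {s t p : ℝ} (hs : 0 < s) (hst : s < t) (hp : t ≤ u p)
    (hE : IntegrableOn (deriv u) (u ⁻¹' Ioo s t)) :
    2 * (t - s) ≤ ∫ y in u ⁻¹' Ioo s t, |deriv u y| := by
  obtain ⟨q, huq, hqp⟩ :=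
    ((hbot.eventually (gt_mem_nhds hs)).and (eventually_le_atBot p)).exists
  obtain ⟨r, hur, hpr⟩ :=
    ((htop.eventually (gt_mem_nhds hs)).and (eventually_ge_atTop p)).exists
  have hrise := sub_le_setIntegral_abs_deriv_of_le_of_le hu hqp hst huq.le hp
    (hint.integrableOn_isCompact isCompact_Icc)
  have hfall := sub_le_setIntegral_abs_deriv_of_le_of_le hu.neg hpr (neg_lt_neg hst)
    (neg_le_neg hp) (neg_le_neg hur.le)
    (by rw [deriv.neg']; exact (hint.integrableOn_isCompact isCompact_Icc).neg)
  have hpre : (-u) ⁻¹' Ioo (-t) (-s) = u ⁻¹' Ioo s t := by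
    ext y; simp only [mem_preimage, mem_Ioo, Pi.neg_apply, neg_lt_neg_iff, and_comm]
  simp only [hpre, deriv.neg', abs_neg, sub_neg_eq_add] at hfall
  have hmeas : MeasurableSet (u ⁻¹' Ioo s t) := hu.continuous.measurable measurableSet_Ioo
  have hdisj : Disjoint (Ioo q p ∩ u ⁻¹' Ioo s t) (Ioo p r ∩ u ⁻¹' Ioo s t) :=
    disjoint_left.2 fun y h₁ h₂ => h₁.1.2.not_gt h₂.1.1
  calc 2 * (t - s) ≤ (∫ y in Ioo q p ∩ u ⁻¹' Ioo s t, |deriv u y|) +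
        ∫ y in Ioo p r ∩ u ⁻¹' Ioo s t, |deriv u y| := by linarith
    _ = ∫ y in (Ioo q p ∩ u ⁻¹' Ioo s t) ∪ (Ioo p r ∩ u ⁻¹' Ioo s t), |deriv u y| :=
      (setIntegral_union hdisj (measurableSet_Ioo.inter hmeas)
        (hE.mono_set inter_subset_right).abs (hE.mono_set inter_subset_right).abs).symm
    _ ≤ ∫ y in u ⁻¹' Ioo s t, |deriv u y| :=
      setIntegral_mono_set hE.abs (ae_of_all _ fun _ => abs_nonneg _)
        (LE.le.eventuallyLE (union_subset inter_subset_right inter_subset_right))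

lemma two_mul_sub_le_setIntegral_abs_deriv (hu : Differentiable ℝ u)
    (hint : LocallyIntegrable (deriv u)) (hbot : Tendsto u atBot (𝓝 0))
    (htop : Tendsto u atTop (𝓝 0)) {s t p : ℝ} (hs : 0 ≤ s) (hp : t ≤ u p)
    (hE : IntegrableOn (deriv u) (u ⁻¹' Ioo s t)) :
    2 * (t - s) ≤ ∫ y in u ⁻¹' Ioo s t, |deriv u y| := by
  set I := ∫ y in u ⁻¹' Ioo s t, |deriv u y|
  have hI : 0 ≤ I := integral_nonneg fun _ => abs_nonneg _
  suffices t - I / 2 ≤ s by linarith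
  refine le_of_forall_gt_imp_ge_of_dense fun s' hs' => ?_
  rcases le_or_gt t s' with hts' | hs't
  · linarith
  have hsub : u ⁻¹' Ioo s' t ⊆ u ⁻¹' Ioo s t := preimage_mono (Ioo_subset_Ioo_left hs'.le)
  have := two_mul_sub_le_setIntegral_abs_deriv_of_pos hu hint hbot htop (hs.trans_lt hs') hs't hp
    (hE.mono_set hsub)
  have := setIntegral_mono_set hE.abs (ae_of_all _ fun _ => abs_nonneg _)
    (LE.le.eventuallyLE hsub)
  linarith

noncomputable def superlevelEnergy (u : ℝ → ℝ) (x : ℝ) : ℝ :=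
  ∫ y in {y | decreasingRearrangement volume u x < u y}, deriv u y ^ 2

lemma superlevelEnergy_nonneg (x : ℝ) : 0 ≤ superlevelEnergy u x :=
  integral_nonneg fun _ => sq_nonneg _

lemma superlevelEnergy_le (hu' : MemLp (deriv u) 2 volume) (x : ℝ) :
    superlevelEnergy u x ≤ ∫ y, deriv u y ^ 2 :=
  setIntegral_le_integral hu'.integrable_sq (ae_of_all _ fun _ => sq_nonneg _)

lemma monotone_superlevelEnergy (hu : BddAbove (range u)) (hu' : MemLp (deriv u) 2 volume) :
    Monotone (superlevelEnergy u) := fun _ _ hab =>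
  setIntegral_mono_set hu'.integrable_sq.integrableOn (ae_of_all _ fun _ => sq_nonneg _)
    (LE.le.eventuallyLE fun _ hy => (antitone_decreasingRearrangement hu hab).trans_lt hy)

lemma four_mul_sq_sub_decreasingRearrangement_le (hu : MemLp u 2 volume)
    (hd : Differentiable ℝ u) (hu' : MemLp (deriv u) 2 volume) {a b : ℝ} (ha : 0 < a)
    (hab : a ≤ b) :
    4 * (decreasingRearrangement volume u b - decreasingRearrangement volume u a) ^ 2 ≤
      (b - a) * (superlevelEnergy u b - superlevelEnergy u a) := by
  set s := decreasingRearrangement volume u b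
  set t := decreasingRearrangement volume u a
  have hlim := tendsto_cocompact_zero_of_memLp_two hu hd hu'
  have hbdd := bddAbove_range_of_tendsto_cocompact hd.continuous hlim
  have hfin : ∀ τ, 0 < τ → volume {y | τ < u y} ≠ ∞ := fun _ =>
    measure_lt_ne_top_of_memLp_two hu
  have hmeas : Measurable u := hd.continuous.measurable
  have hanti : Antitone (decreasingRearrangement volume u) :=
    antitone_decreasingRearrangement hbdd
  set E := u ⁻¹' Ioo s t
  have hE_sub : E ⊆ {y | s < u y} \ {y | t < u y} := fun y hy => ⟨hy.1, hy.2.not_gt⟩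
  have hsub : {y | t < u y} ⊆ {y | s < u y} := fun y hy => (hanti hab).trans_lt hy
  have henergy : ∫ y in E, deriv u y ^ 2 ≤ superlevelEnergy u b - superlevelEnergy u a :=
    (setIntegral_mono_set hu'.integrable_sq.integrableOn (ae_of_all _ fun _ => sq_nonneg _)
      (LE.le.eventuallyLE hE_sub)).trans_eq
      (setIntegral_sdiff (measurableSet_lt measurable_const hmeas)
        hu'.integrable_sq.integrableOn hsub)
  have hX : 0 ≤ ∫ y in E, deriv u y ^ 2 := integral_nonneg fun _ => sq_nonneg _
  obtain hst | hst : s = t ∨ s < t := (hanti hab).eq_or_lt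
  · rw [hst, sub_self, zero_pow two_ne_zero, mul_zero]
    exact mul_nonneg (sub_nonneg.2 hab) (hX.trans henergy)
  have hvol : volume E ≤ .ofReal (b - a) :=
    measure_preimage_Ioo_decreasingRearrangement_le hbdd hmeas hfin ha.le
  have hvol_ne : volume E ≠ ∞ := ne_top_of_le_ne_top ENNReal.ofReal_ne_top hvol
  obtain ⟨p, hp⟩ : ∃ p, t ≤ u p := by
    have := ofReal_le_measure_decreasingRearrangement_le hmeas hfin
      ((decreasingRearrangement_nonneg hbdd b).trans_lt hst)
    exact nonempty_of_measure_ne_zero ((ENNReal.ofReal_pos.2 ha).trans_le this).ne'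
  have hcross := two_mul_sub_le_setIntegral_abs_deriv hd
    (hu'.locallyIntegrable one_le_two) (hlim.mono_left atBot_le_cocompact)
    (hlim.mono_left atTop_le_cocompact) (decreasingRearrangement_nonneg hbdd b) hp
    (hu'.integrableOn_of_measure_ne_top one_le_two hvol_ne)
  have hCS := sq_setIntegral_abs_le hvol_ne (hu'.restrict E)
  have hvol_real : volume.real E ≤ b - a :=
    ENNReal.toReal_le_of_le_ofReal (sub_nonneg.2 hab) hvol
  calc 4 * (s - t) ^ 2 = (2 * (t - s)) ^ 2 := by ring
    _ ≤ (∫ y in E, |deriv u y|) ^ 2 := pow_le_pow_left₀ (by linarith) hcross 2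
    _ ≤ volume.real E * ∫ y in E, deriv u y ^ 2 := hCS
    _ ≤ (b - a) * (superlevelEnergy u b - superlevelEnergy u a) :=
      mul_le_mul hvol_real henergy hX (sub_nonneg.2 hab)

end Sobolev

theorem stmt_14_general (u : ℝ → ℝ)
    (hu2 : MemLp u 2 (volume : Measure ℝ))
    (hdiff : Differentiable ℝ u)
    (hu2' : MemLp (deriv u) 2 (volume : Measure ℝ)) :
    let ustar : ℝ → ℝ := fun x =>
      sInf {t : ℝ | 0 ≤ t ∧ volume {y : ℝ | t < u y} ≤ ENNReal.ofReal x}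
    (∫ x in Ioi (0:ℝ), (deriv ustar x) ^ 2) ≤ ∫ x : ℝ, (deriv u x) ^ 2 := by
  intro ustar
  change ∫ x in Ioi 0, deriv (decreasingRearrangement volume u) x ^ 2 ≤ _
  have hbdd : BddAbove (range u) := bddAbove_range_of_tendsto_cocompact hdiff.continuous
    (tendsto_cocompact_zero_of_memLp_two hu2 hdiff hu2')
  have hquarter := setIntegral_deriv_sq_le_of_sq_sub_le (f := decreasingRearrangement volume u)
    (G := fun x => superlevelEnergy u x / 4) measurableSet_Ioi
    ((monotone_superlevelEnergy hbdd hu2').div_const (by norm_num))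
    (fun x => div_nonneg (superlevelEnergy_nonneg x) (by norm_num))
    (fun x => div_le_div_of_nonneg_right (superlevelEnergy_le hu2' x) (by norm_num))
    fun a ha b hab => by
      have := four_mul_sq_sub_decreasingRearrangement_le hu2 hdiff hu2' ha hab.le
      linarith
  have hT : 0 ≤ ∫ x, deriv u x ^ 2 := integral_nonneg fun _ => sq_nonneg _
  linarith

/-- Pólya–Szegő inequality on the line: for nonnegative `u ∈ H¹(ℝ)`, the decreasing
rearrangement `u*` onto `ℝ⁺` satisfies `∫_{ℝ⁺} |(u*)'|² ≤ ∫_ℝ |u'|²`. -/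
theorem stmt_14 (u : ℝ → ℝ)
    (hu2 : MemLp u 2 (volume : Measure ℝ))
    (hdiff : Differentiable ℝ u)
    (hu2' : MemLp (deriv u) 2 (volume : Measure ℝ))
    (hnn : ∀ x, 0 ≤ u x) :
    let ustar : ℝ → ℝ := fun x =>
      sInf {t : ℝ | 0 ≤ t ∧ volume {y : ℝ | t < u y} ≤ ENNReal.ofReal x}
    (∫ x in Ioi (0:ℝ), (deriv ustar x) ^ 2) ≤ ∫ x : ℝ, (deriv u x) ^ 2 :=
  stmt_14_general u hu2 hdiff hu2'
end

section
/- (Boundedness of minimizing sequences via a modified Gagliardo–Nirenberg inequality) Suppose 0 < μ ≤ μ_ℝ, C > 0, and α > 0. Let (u_n) be a sequence with ‖u_n‖₂² = μ for all n, such that for each n there exists θ_n ∈ [0, μ] with ‖u_n‖₆⁶ ≤ K_ℝ (μ − θ_n)² ‖u_n'‖₂² + C θ_n^{1/2}, and suppose 6E(u_n) = 3‖u_n'‖₂² − ‖u_n‖₆⁶ ≤ −6α for all n. Then θ_n^{1/2} ≥ 6α/C for all n, and ‖u_n'‖₂ is bounded uniformly in n. -/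
open MeasureTheory Set Filter

/-- The best constant in the one-dimensional Gagliardo–Nirenberg inequality
`‖u‖₆⁶ ≤ K_ℝ ‖u‖₂⁴ ‖u'‖₂²` on `H¹(ℝ)`. -/
noncomputable def KR : ℝ :=
  sSup {r : ℝ | ∃ u : ℝ → ℝ, MemLp u 2 (volume : Measure ℝ) ∧ Differentiable ℝ u ∧
    MemLp (deriv u) 2 (volume : Measure ℝ) ∧ u ≠ 0 ∧
    r = (∫ x : ℝ, |u x| ^ 6) / ((∫ x : ℝ, (u x) ^ 2) ^ 2 * ∫ x : ℝ, (deriv u x) ^ 2)}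

/-- The critical mass `μ_ℝ = √(3/K_ℝ)`. -/
noncomputable def muR : ℝ := Real.sqrt (3 / KR)

/-!
Adding the modified Gagliardo–Nirenberg inequality to the energy bound gives
`(3 - K_ℝ (μ - θₙ)²) ‖uₙ'‖₂² ≤ C √θₙ - 6α`.
Since `μ ≤ μ_ℝ`, the coefficient on the left is nonnegative, so `C √θₙ ≥ 6α`.
Then `θₙ ≥ θ₀ := (6α/C)² > 0`, so the coefficient is at least
`δ := 3 - K_ℝ⁺ (μ - θ₀)² > 0`, and `‖uₙ'‖₂² ≤ C √μ / δ`. The positive part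
`K_ℝ⁺ = max K_ℝ 0` appears because nothing here rules out `K_ℝ ≤ 0`.
-/

namespace GagliardoNirenberg

variable {K μ θ θ₀ a : ℝ}

lemma coeff_mul_le_of_energy_le {C α I P : ℝ}
    (hGN : P ≤ K * (μ - θ) ^ 2 * I + C * √θ) (hE : 3 * I - P ≤ -6 * α) :
    (3 - K * (μ - θ) ^ 2) * I ≤ C * √θ - 6 * α := by
  linarith

lemma max_mul_sq_le_of_le_sqrt_div (hμ : 0 ≤ μ) (ha : 0 ≤ a) (h : μ ≤ √(a / K)) :
    max K 0 * μ ^ 2 ≤ a := by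
  rcases le_or_gt K 0 with hK | hK
  · simpa [max_eq_right hK] using ha
  · rw [max_eq_left hK.le, ← le_div_iff₀' hK]
    exact (Real.le_sqrt hμ (by positivity)).1 h

lemma mul_sq_sub_le_max_mul_sq_sub (hθ₀ : θ₀ ≤ θ) (hθ : θ ≤ μ) :
    K * (μ - θ) ^ 2 ≤ max K 0 * (μ - θ₀) ^ 2 := by
  have hsq : (μ - θ) ^ 2 ≤ (μ - θ₀) ^ 2 := by nlinarith
  calc K * (μ - θ) ^ 2 ≤ max K 0 * (μ - θ) ^ 2 :=
        mul_le_mul_of_nonneg_right (le_max_left K 0) (sq_nonneg _)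
    _ ≤ max K 0 * (μ - θ₀) ^ 2 := mul_le_mul_of_nonneg_left hsq (le_max_right K 0)

lemma max_mul_sq_sub_lt (hK : max K 0 * μ ^ 2 ≤ a) (ha : 0 < a) (h₀ : 0 < θ₀) (hθ₀ : θ₀ ≤ μ) :
    max K 0 * (μ - θ₀) ^ 2 < a := by
  rcases le_or_gt K 0 with hK0 | hK0
  · simpa [max_eq_right hK0] using ha
  · rw [max_eq_left hK0.le] at hK ⊢
    have hsq : (μ - θ₀) ^ 2 < μ ^ 2 := by nlinarith
    linarith [mul_lt_mul_of_pos_left hsq hK0]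

end GagliardoNirenberg

open GagliardoNirenberg in
theorem stmt_18_general (μ C α : ℝ) (hμR : μ ≤ muR) (hC : 0 < C) (hα : 0 < α)
    (u : ℕ → ℝ → ℝ) (θ : ℕ → ℝ)
    (hθ : ∀ n, θ n ∈ Icc (0:ℝ) μ)
    (hGN : ∀ n, (∫ x : ℝ, |u n x| ^ 6)
        ≤ KR * (μ - θ n) ^ 2 * (∫ x : ℝ, (deriv (u n) x) ^ 2) + C * Real.sqrt (θ n))
    (hE : ∀ n, 3 * (∫ x : ℝ, (deriv (u n) x) ^ 2) - (∫ x : ℝ, |u n x| ^ 6) ≤ -6 * α) :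
    (∀ n, 6 * α / C ≤ Real.sqrt (θ n)) ∧
    ∃ B : ℝ, ∀ n, Real.sqrt (∫ x : ℝ, (deriv (u n) x) ^ 2) ≤ B := by
  set I : ℕ → ℝ := fun n ↦ ∫ x : ℝ, (deriv (u n) x) ^ 2
  have hI : ∀ n, 0 ≤ I n := fun n ↦ integral_nonneg fun _ ↦ sq_nonneg _
  have hcoer : ∀ n, (3 - KR * (μ - θ n) ^ 2) * I n ≤ C * √(θ n) - 6 * α :=
    fun n ↦ coeff_mul_le_of_energy_le (hGN n) (hE n)
  have hKμ : max KR 0 * μ ^ 2 ≤ 3 :=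
    max_mul_sq_le_of_le_sqrt_div ((hθ 0).1.trans (hθ 0).2) (by norm_num) hμR
  have hθlower : ∀ n, 6 * α / C ≤ √(θ n) := fun n ↦ by
    have hcoef : KR * (μ - θ n) ^ 2 ≤ 3 :=
      (sub_zero μ ▸ mul_sq_sub_le_max_mul_sq_sub (hθ n).1 (hθ n).2).trans hKμ
    have := mul_nonneg (sub_nonneg.2 hcoef) (hI n)
    rw [div_le_iff₀ hC]
    linarith [hcoer n]
  refine ⟨hθlower, ?_⟩
  set θ₀ := (6 * α / C) ^ 2
  have hθ₀ : ∀ n, θ₀ ≤ θ n := fun n ↦ (Real.le_sqrt (by positivity) (hθ n).1).1 (hθlower n)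
  set δ := 3 - max KR 0 * (μ - θ₀) ^ 2
  have hδ : 0 < δ :=
    sub_pos.2 (max_mul_sq_sub_lt hKμ (by norm_num) (by positivity) ((hθ₀ 0).trans (hθ 0).2))
  refine ⟨√(C * √μ / δ), fun n ↦ Real.sqrt_le_sqrt ?_⟩
  rw [le_div_iff₀' hδ]
  calc δ * I n ≤ (3 - KR * (μ - θ n) ^ 2) * I n :=
        mul_le_mul_of_nonneg_right
          (sub_le_sub_left (mul_sq_sub_le_max_mul_sq_sub (hθ₀ n) (hθ n).2) 3) (hI n)
    _ ≤ C * √(θ n) - 6 * α := hcoer n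
    _ ≤ C * √μ := by
        linarith [mul_le_mul_of_nonneg_left (Real.sqrt_le_sqrt (hθ n).2) hC.le]

/-- Boundedness of minimizing sequences via the modified Gagliardo–Nirenberg inequality:
if each `uₙ` has mass `μ ≤ μ_ℝ`, satisfies the modified inequality with parameter
`θₙ ∈ [0, μ]`, and `6E(uₙ) ≤ -6α`, then `√θₙ ≥ 6α/C` and `‖uₙ'‖₂` is bounded. -/
theorem stmt_18 (μ C α : ℝ) (hμ : 0 < μ) (hμR : μ ≤ muR) (hC : 0 < C) (hα : 0 < α)
    (u : ℕ → ℝ → ℝ) (θ : ℕ → ℝ)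
    (hmass : ∀ n, (∫ x : ℝ, (u n x) ^ 2) = μ)
    (hθ : ∀ n, θ n ∈ Icc (0:ℝ) μ)
    (hGN : ∀ n, (∫ x : ℝ, |u n x| ^ 6)
        ≤ KR * (μ - θ n) ^ 2 * (∫ x : ℝ, (deriv (u n) x) ^ 2) + C * Real.sqrt (θ n))
    (hE : ∀ n, 3 * (∫ x : ℝ, (deriv (u n) x) ^ 2) - (∫ x : ℝ, |u n x| ^ 6) ≤ -6 * α) :
    (∀ n, 6 * α / C ≤ Real.sqrt (θ n)) ∧
    ∃ B : ℝ, ∀ n, Real.sqrt (∫ x : ℝ, (deriv (u n) x) ^ 2) ≤ B :=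
  stmt_18_general μ C α hμR hC hα u θ hθ hGN hE
end
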